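/- arXiv:2407.16275 — 2 statements merged into one kernel-verified Lean document; each statement's English description precedes it below -/
import Mathlib

section
/- Let G be a group, T ≤ G a subgroup, g ∈ T, and G_g the centralizer of g. For w, w' ∈ N_G(T), the double cosets satisfy G_g w T = G_g w' T if and only if w' w⁻¹ ∈ N_{G_g}(T). Consequently the set G_g N_G(T)/T decomposes as a disjoint union of the sets G_g w T / T over a set of representatives w of N_{G_g}(T)\N_G(T). -/
/-!
If `a` normalizes `K` and `K ≤ H`, then `H a K = H K a = H a`: the double coset is just the right
coset of `a`, so `H a K = H b K` exactly when `b a⁻¹ ∈ H`. With `H = G_g` and `K = T`, which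
centralizes `g`, this is the criterion; "equal or disjoint" holds for all double cosets.
-/

/-- The double coset `G_g w T`, for `G_g` the centralizer of `g` and `w ∈ N_G(T)`. -/
def doubleCoset {G : Type*} [Group G] (T : Subgroup G) (g w : G) : Set G :=
  {x : G | ∃ c ∈ Subgroup.centralizer {g}, ∃ t ∈ T, x = c * w * t}

namespace DoubleCoset

variable {G : Type*} [Group G] {H K : Subgroup G} {a b : G}

theorem mem_doubleCoset_iff_mul_inv_mem (hKH : K ≤ H) (ha : a ∈ Subgroup.normalizer (K : Set G)) :
    b ∈ doubleCoset a H K ↔ b * a⁻¹ ∈ H := by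
  rw [mem_doubleCoset]
  constructor
  · rintro ⟨h, hh, k, hk, rfl⟩
    have hconj : a * k * a⁻¹ ∈ K := (Subgroup.mem_normalizer_iff.mp ha k).mp hk
    have hsplit : h * a * k * a⁻¹ = h * (a * k * a⁻¹) := by group
    rw [hsplit]
    exact H.mul_mem hh (hKH hconj)
  · intro hb
    exact ⟨b * a⁻¹, hb, 1, K.one_mem, by group⟩

theorem doubleCoset_eq_iff_mul_inv_mem (hKH : K ≤ H)
    (ha : a ∈ Subgroup.normalizer (K : Set G)) :
    doubleCoset a H K = doubleCoset b H K ↔ b * a⁻¹ ∈ H := by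
  rw [← mem_doubleCoset_iff_mul_inv_mem hKH ha]
  exact ⟨fun h => h ▸ mem_doubleCoset_self H K b, fun hb => (doubleCoset_eq_of_mem hb).symm⟩

theorem doubleCoset_eq_or_inter_eq_empty (H K : Subgroup G) (a b : G) :
    doubleCoset a H K = doubleCoset b H K ∨ doubleCoset a H K ∩ doubleCoset b H K = ∅ := by
  by_cases h : Disjoint (doubleCoset a H K) (doubleCoset b H K)
  · exact Or.inr (Set.disjoint_iff_inter_eq_empty.mp h)
  · exact Or.inl (eq_of_not_disjoint h)

end DoubleCoset

theorem doubleCoset_eq_doubleCoset_centralizer {G : Type*} [Group G] (T : Subgroup G) (g w : G) :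
    doubleCoset T g w = DoubleCoset.doubleCoset w (Subgroup.centralizer {g}) T := by
  ext x
  simp only [doubleCoset, DoubleCoset.mem_doubleCoset, Set.mem_ofPred_eq, SetLike.mem_coe]

theorem doubleCoset_eq_iff_general {G : Type*} [Group G] (T : Subgroup G) (g : G)
    (hTg : ∀ t ∈ T, t * g = g * t)
    (w w' : G) (hw : w ∈ Subgroup.normalizer (T : Set G)) (hw' : w' ∈ Subgroup.normalizer (T : Set G)) :
    (doubleCoset T g w = doubleCoset T g w' ↔
      (w' * w⁻¹ ∈ Subgroup.centralizer {g} ∧ w' * w⁻¹ ∈ Subgroup.normalizer (T : Set G))) ∧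
    (doubleCoset T g w = doubleCoset T g w' ∨
      doubleCoset T g w ∩ doubleCoset T g w' = ∅) := by
  have hT : T ≤ Subgroup.centralizer {g} := fun t ht =>
    Subgroup.mem_centralizer_singleton_iff.mpr (hTg t ht)
  have hnorm : w' * w⁻¹ ∈ Subgroup.normalizer (T : Set G) := mul_mem hw' (inv_mem hw)
  simp only [doubleCoset_eq_doubleCoset_centralizer]
  refine ⟨?_, DoubleCoset.doubleCoset_eq_or_inter_eq_empty _ _ w w'⟩
  rw [DoubleCoset.doubleCoset_eq_iff_mul_inv_mem hT hw, and_iff_left hnorm]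

/-- For `w, w' ∈ N_G(T)` and `g ∈ T` (with `T` centralizing `g`), the double cosets
`G_g w T` and `G_g w' T` coincide if and only if `w' w⁻¹ ∈ N_{G_g}(T)`; consequently they
are equal or disjoint, giving the decomposition of `G_g N_G(T)/T` as a disjoint union over
representatives of `N_{G_g}(T) \ N_G(T)`. -/
theorem doubleCoset_eq_iff {G : Type*} [Group G] (T : Subgroup G) (g : G) (hg : g ∈ T)
    (hTg : ∀ t ∈ T, t * g = g * t)
    (w w' : G) (hw : w ∈ Subgroup.normalizer (T : Set G)) (hw' : w' ∈ Subgroup.normalizer (T : Set G)) :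
    (doubleCoset T g w = doubleCoset T g w' ↔
      (w' * w⁻¹ ∈ Subgroup.centralizer {g} ∧ w' * w⁻¹ ∈ Subgroup.normalizer (T : Set G))) ∧
    (doubleCoset T g w = doubleCoset T g w' ∨
      doubleCoset T g w ∩ doubleCoset T g w' = ∅) :=
  doubleCoset_eq_iff_general T g hTg w w' hw hw'
end

section
/- Let D be an unbounded self-adjoint operator on a Hilbert space of the form D = [[0, D⁻],[D⁺, 0]] with respect to a ℤ/2-grading, where D⁻ = (D⁺)*. Then the matrix e(t) = [[e^{−tD⁻D⁺}, e^{−(t/2)D⁻D⁺}((1−e^{−tD⁻D⁺})/(D⁻D⁺))D⁻],[e^{−(t/2)D⁺D⁻}D⁺, 1 − e^{−tD⁺D⁻}]] is an idempotent for every t > 0: e(t)² = e(t). -/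
/-! With `P = S T` and `Q = T S`, the intertwining `T e^{-sP} = e^{-sQ} T` and the identity
`(∫₀ᵗ e^{-sP} ds) P = 1 - e^{-tP}` turn every product of two off-diagonal entries into a function
of `P` or of `Q` alone: `e₁₂ e₂₁ = e₁₁ - e₁₁²`, `e₂₁ e₁₂ = e₂₂ - e₂₂²`, `e₁₂ e₂₂ = e₁₂ - e₁₁ e₁₂`
and `e₂₂ e₂₁ = e₂₁ - e₂₁ e₁₁`. These are exactly the four entries of `e(t)² = e(t)`. -/

open ContinuousLinearMap NormedSpace MeasureTheory

section BanachAlgebra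

variable {𝔸 : Type*} [NormedRing 𝔸] [NormedAlgebra ℝ 𝔸]

noncomputable def heatSemigroup (A : 𝔸) (s : ℝ) : 𝔸 := exp (-(s • A))

lemma heatSemigroup_zero (A : 𝔸) : heatSemigroup A 0 = 1 := by
  simp [heatSemigroup]

lemma commute_heatSemigroup (A : 𝔸) (a b : ℝ) :
    Commute (heatSemigroup A a) (heatSemigroup A b) :=
  (((Commute.refl A).smul_left a).smul_right b).neg_left.neg_right.exp

variable [CompleteSpace 𝔸]

lemma hasDerivAt_heatSemigroup (A : 𝔸) (s : ℝ) :
    HasDerivAt (heatSemigroup A) (-(heatSemigroup A s * A)) s := by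
  have h := (hasDerivAt_exp_smul_const (𝕂 := ℝ) A (-s)).scomp s (hasDerivAt_neg s)
  unfold heatSemigroup
  simpa [Function.comp_def, neg_smul] using h

lemma continuous_heatSemigroup (A : 𝔸) : Continuous (heatSemigroup A) :=
  continuous_iff_continuousAt.2 fun s => (hasDerivAt_heatSemigroup A s).continuousAt

lemma heatSemigroup_add (A : 𝔸) (a b : ℝ) :
    heatSemigroup A (a + b) = heatSemigroup A a * heatSemigroup A b := by
  let +nondep : NormedAlgebra ℚ 𝔸 := .restrictScalars ℚ ℝ 𝔸
  rw [heatSemigroup, add_smul, neg_add,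
    exp_add_of_commute (((Commute.refl A).smul_left a).smul_right b).neg_left.neg_right]
  rfl

lemma heatSemigroup_half_mul_half (A : 𝔸) (t : ℝ) :
    heatSemigroup A (t / 2) * heatSemigroup A (t / 2) = heatSemigroup A t := by
  rw [← heatSemigroup_add, add_halves]

lemma Commute.intervalIntegral_right {x : 𝔸} {f : ℝ → 𝔸} {a b : ℝ}
    (hf : IntervalIntegrable f volume a b) (h : ∀ s, Commute x (f s)) :
    Commute x (∫ s in a..b, f s) := by
  have hl := (ContinuousLinearMap.mul ℝ 𝔸 x).intervalIntegral_comp_comm hf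
  have hr := ((ContinuousLinearMap.mul ℝ 𝔸).flip x).intervalIntegral_comp_comm hf
  simp only [flip_apply, mul_apply'] at hl hr
  rw [Commute, SemiconjBy, ← hl, ← hr]
  exact intervalIntegral.integral_congr fun s _ => (h s).eq

lemma intervalIntegral_heatSemigroup_mul_self (A : 𝔸) (t : ℝ) :
    (∫ s in (0 : ℝ)..t, heatSemigroup A s) * A = 1 - heatSemigroup A t := by
  have hint := (continuous_heatSemigroup A).intervalIntegrable (μ := volume) 0 t
  have hmul := ((ContinuousLinearMap.mul ℝ 𝔸).flip A).intervalIntegral_comp_comm hint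
  simp only [flip_apply, mul_apply'] at hmul
  have hderiv (s : ℝ) : HasDerivAt (-heatSemigroup A) (heatSemigroup A s * A) s := by
    simpa using (hasDerivAt_heatSemigroup A s).neg
  have hftc := intervalIntegral.integral_eq_sub_of_hasDerivAt (fun s _ => hderiv s)
    (((continuous_heatSemigroup A).mul continuous_const).intervalIntegrable 0 t)
  simp only [Pi.neg_apply, heatSemigroup_zero] at hftc
  rw [← hmul, hftc, neg_sub_neg]

lemma commute_heatSemigroup_intervalIntegral (A : 𝔸) (a t : ℝ) :
    Commute (heatSemigroup A a) (∫ s in (0 : ℝ)..t, heatSemigroup A s) :=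
  Commute.intervalIntegral_right ((continuous_heatSemigroup A).intervalIntegrable 0 t)
    (commute_heatSemigroup A a)

end BanachAlgebra

section Intertwining

variable {𝕜 E F : Type*} [RCLike 𝕜]
  [NormedAddCommGroup E] [NormedSpace 𝕜 E] [CompleteSpace E]
  [NormedAddCommGroup F] [NormedSpace 𝕜 F] [CompleteSpace F]

lemma comp_exp_eq_exp_comp (T : E →L[𝕜] F) {A : E →L[𝕜] E} {B : F →L[𝕜] F}
    (h : T ∘L A = B ∘L T) : T ∘L exp A = exp B ∘L T := by
  have hpow (n : ℕ) : T ∘L A ^ n = (B ^ n) ∘L T := by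
    induction n with
    | zero => rfl
    | succ n ih => rw [pow_succ, pow_succ, mul_def, mul_def, ← comp_assoc, ih, comp_assoc, h,
        comp_assoc]
  rw [exp_eq_tsum 𝕜, exp_eq_tsum 𝕜]
  change compL 𝕜 E E F T _ = (compL 𝕜 E F F).flip T _
  rw [(compL 𝕜 E E F T).map_tsum (expSeries_summable' A),
    ((compL 𝕜 E F F).flip T).map_tsum (expSeries_summable' B)]
  congr 1 with n : 1
  simp only [map_smul, compL_apply, hpow n, flip_apply]

end Intertwining

section HeatMatrix

variable {E F : Type*}
  [NormedAddCommGroup E] [NormedSpace ℂ E] [CompleteSpace E]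
  [NormedAddCommGroup F] [NormedSpace ℂ F] [CompleteSpace F]

lemma comp_intervalIntegral_eq_intervalIntegral_comp (T : E →L[ℂ] F) {f : ℝ → E →L[ℂ] E}
    {g : ℝ → F →L[ℂ] F} {a b : ℝ} (hf : IntervalIntegrable f volume a b)
    (hg : IntervalIntegrable g volume a b) (h : ∀ s, T ∘L f s = g s ∘L T) :
    T ∘L (∫ s in a..b, f s) = (∫ s in a..b, g s) ∘L T := by
  have hl := (compL ℂ E E F T).intervalIntegral_comp_comm hf
  have hr := ((compL ℂ E F F).flip T).intervalIntegral_comp_comm hg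
  simp only [compL_apply, flip_apply] at hl hr
  rw [← hl, ← hr]
  exact intervalIntegral.integral_congr fun s _ => h s

variable (T : E →L[ℂ] F) (S : F →L[ℂ] E) (t : ℝ)

lemma comp_heatSemigroup (a : ℝ) :
    T ∘L heatSemigroup (S ∘L T) a = heatSemigroup (T ∘L S) a ∘L T := by
  refine comp_exp_eq_exp_comp T ?_
  rw [comp_neg, neg_comp, comp_smul, smul_comp, comp_assoc]

lemma comp_intervalIntegral_heatSemigroup :
    T ∘L (∫ s in (0 : ℝ)..t, heatSemigroup (S ∘L T) s) =
      (∫ s in (0 : ℝ)..t, heatSemigroup (T ∘L S) s) ∘L T :=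
  comp_intervalIntegral_eq_intervalIntegral_comp T
    ((continuous_heatSemigroup _).intervalIntegrable 0 t)
    ((continuous_heatSemigroup _).intervalIntegrable 0 t) (comp_heatSemigroup T S)

/- The entries of `e(t)` for `D = [[0, S], [T, 0]]`, i.e. `T = D⁺` and `S = D⁻`. -/
noncomputable def heatMatrix₁₁ : E →L[ℂ] E := heatSemigroup (S ∘L T) t

noncomputable def heatMatrix₁₂ : F →L[ℂ] E :=
  (heatSemigroup (S ∘L T) (t / 2) ∘L ∫ s in (0 : ℝ)..t, heatSemigroup (S ∘L T) s) ∘L S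

noncomputable def heatMatrix₂₁ : E →L[ℂ] F := heatSemigroup (T ∘L S) (t / 2) ∘L T

noncomputable def heatMatrix₂₂ : F →L[ℂ] F := 1 - heatSemigroup (T ∘L S) t

lemma heatMatrix₁₂_comp_heatMatrix₂₁ :
    heatMatrix₁₂ T S t ∘L heatMatrix₂₁ T S t =
      heatMatrix₁₁ T S t - heatMatrix₁₁ T S t ∘L heatMatrix₁₁ T S t := by
  set P := S ∘L T
  set I := ∫ s in (0 : ℝ)..t, heatSemigroup P s
  calc ((heatSemigroup P (t / 2) ∘L I) ∘L S) ∘L (heatSemigroup (T ∘L S) (t / 2) ∘L T)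
      = heatSemigroup P (t / 2) * I * heatSemigroup P (t / 2) * P := by
        rw [comp_assoc, ← comp_assoc S, comp_heatSemigroup S T]; rfl
    _ = heatSemigroup P (t / 2) * heatSemigroup P (t / 2) * (I * P) := by
        rw [mul_assoc _ I, ← (commute_heatSemigroup_intervalIntegral P _ t).eq, mul_assoc,
          mul_assoc, mul_assoc]
    _ = heatSemigroup P t * (1 - heatSemigroup P t) := by
        rw [heatSemigroup_half_mul_half, intervalIntegral_heatSemigroup_mul_self]
    _ = heatSemigroup P t - heatSemigroup P t ∘L heatSemigroup P t := by
        rw [mul_sub, mul_one]; rfl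

lemma heatMatrix₂₁_comp_heatMatrix₁₂ :
    heatMatrix₂₁ T S t ∘L heatMatrix₁₂ T S t =
      heatMatrix₂₂ T S t - heatMatrix₂₂ T S t ∘L heatMatrix₂₂ T S t := by
  set Q := T ∘L S
  calc (heatSemigroup Q (t / 2) ∘L T) ∘L
        ((heatSemigroup (S ∘L T) (t / 2) ∘L ∫ s in (0 : ℝ)..t, heatSemigroup (S ∘L T) s) ∘L S)
      = heatSemigroup Q (t / 2) * heatSemigroup Q (t / 2) *
          ((∫ s in (0 : ℝ)..t, heatSemigroup Q s) * Q) := by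
        rw [comp_assoc, ← comp_assoc T, ← comp_assoc T, comp_heatSemigroup,
          comp_assoc _ T, comp_intervalIntegral_heatSemigroup]; rfl
    _ = (1 - heatSemigroup Q t) - (1 - heatSemigroup Q t) * (1 - heatSemigroup Q t) := by
        rw [heatSemigroup_half_mul_half, intervalIntegral_heatSemigroup_mul_self]; noncomm_ring

lemma heatMatrix₁₂_comp_heatMatrix₂₂ :
    heatMatrix₁₂ T S t ∘L heatMatrix₂₂ T S t =
      heatMatrix₁₂ T S t - heatMatrix₁₁ T S t ∘L heatMatrix₁₂ T S t := by
  set P := S ∘L T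
  set I := ∫ s in (0 : ℝ)..t, heatSemigroup P s
  have hcomm : Commute (heatSemigroup P (t / 2) * I) (heatSemigroup P t) :=
    ((commute_heatSemigroup P _ t).mul_left (commute_heatSemigroup_intervalIntegral P t t).symm)
  calc ((heatSemigroup P (t / 2) ∘L I) ∘L S) ∘L (1 - heatSemigroup (T ∘L S) t)
      = (heatSemigroup P (t / 2) ∘L I) ∘L S -
          (heatSemigroup P (t / 2) * I * heatSemigroup P t) ∘L S := by
        rw [comp_sub, one_def, comp_id, comp_assoc _ S, comp_heatSemigroup S T]; rfl
    _ = _ := by rw [hcomm.eq]; rfl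

lemma heatMatrix₂₂_comp_heatMatrix₂₁ :
    heatMatrix₂₂ T S t ∘L heatMatrix₂₁ T S t =
      heatMatrix₂₁ T S t - heatMatrix₂₁ T S t ∘L heatMatrix₁₁ T S t := by
  set Q := T ∘L S
  calc (1 - heatSemigroup Q t) ∘L (heatSemigroup Q (t / 2) ∘L T)
      = heatSemigroup Q (t / 2) ∘L T - (heatSemigroup Q t * heatSemigroup Q (t / 2)) ∘L T := by
        rw [sub_comp, one_def, id_comp]; rfl
    _ = _ := by
        rw [(commute_heatSemigroup Q t _).eq, heatMatrix₂₁, heatMatrix₁₁, comp_assoc,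
          comp_heatSemigroup]; rfl

theorem heatMatrix_idempotent :
    heatMatrix₁₁ T S t ∘L heatMatrix₁₁ T S t + heatMatrix₁₂ T S t ∘L heatMatrix₂₁ T S t =
        heatMatrix₁₁ T S t ∧
      heatMatrix₁₁ T S t ∘L heatMatrix₁₂ T S t + heatMatrix₁₂ T S t ∘L heatMatrix₂₂ T S t =
        heatMatrix₁₂ T S t ∧
      heatMatrix₂₁ T S t ∘L heatMatrix₁₁ T S t + heatMatrix₂₂ T S t ∘L heatMatrix₂₁ T S t =
        heatMatrix₂₁ T S t ∧
      heatMatrix₂₁ T S t ∘L heatMatrix₁₂ T S t + heatMatrix₂₂ T S t ∘L heatMatrix₂₂ T S t =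
        heatMatrix₂₂ T S t := by
  rw [heatMatrix₁₂_comp_heatMatrix₂₁, heatMatrix₁₂_comp_heatMatrix₂₂,
    heatMatrix₂₂_comp_heatMatrix₂₁, heatMatrix₂₁_comp_heatMatrix₁₂]
  refine ⟨?_, ?_, ?_, ?_⟩ <;> abel

end HeatMatrix

theorem heat_idempotent_general
    {Hp Hm : Type*}
    [NormedAddCommGroup Hp] [InnerProductSpace ℂ Hp] [CompleteSpace Hp]
    [NormedAddCommGroup Hm] [InnerProductSpace ℂ Hm] [CompleteSpace Hm]
    (Dp : Hp →L[ℂ] Hm) (t : ℝ) :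
    ∀ (Dm : Hm →L[ℂ] Hp), Dm = ContinuousLinearMap.adjoint Dp →
    ∀ (P : Hp →L[ℂ] Hp), P = Dm ∘L Dp →
    ∀ (Q : Hm →L[ℂ] Hm), Q = Dp ∘L Dm →
    ∀ (e₁₁ : Hp →L[ℂ] Hp), e₁₁ = NormedSpace.exp (-(t • P)) →
    ∀ (e₁₂ : Hm →L[ℂ] Hp),
      e₁₂ = (NormedSpace.exp (-((t / 2) • P)) ∘L
        (∫ s in (0 : ℝ)..t, NormedSpace.exp (-(s • P)))) ∘L Dm →
    ∀ (e₂₁ : Hp →L[ℂ] Hm), e₂₁ = NormedSpace.exp (-((t / 2) • Q)) ∘L Dp →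
    ∀ (e₂₂ : Hm →L[ℂ] Hm), e₂₂ = 1 - NormedSpace.exp (-(t • Q)) →
      (e₁₁ ∘L e₁₁ + e₁₂ ∘L e₂₁ = e₁₁ ∧
       e₁₁ ∘L e₁₂ + e₁₂ ∘L e₂₂ = e₁₂ ∧
       e₂₁ ∘L e₁₁ + e₂₂ ∘L e₂₁ = e₂₁ ∧
       e₂₁ ∘L e₁₂ + e₂₂ ∘L e₂₂ = e₂₂) := by
  rintro Dm - P rfl Q rfl e₁₁ rfl e₁₂ rfl e₂₁ rfl e₂₂ rfl
  exact heatMatrix_idempotent Dp Dm t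

/-- The heat-operator matrix
`e(t) = [[e^{−tD⁻D⁺}, e^{−(t/2)D⁻D⁺}((1−e^{−tD⁻D⁺})/(D⁻D⁺))D⁻], [e^{−(t/2)D⁺D⁻}D⁺, 1 − e^{−tD⁺D⁻}]]`
is an idempotent for every `t > 0`, for an operator `D = [[0, D⁻], [D⁺, 0]]` with
`D⁻ = (D⁺)*`.  Here `(1−e^{−ts})/s` (with value `t` at `s = 0`) is realised as
`∫₀ᵗ e^{−su} du`; idempotency `e(t)² = e(t)` is stated entrywise. -/
theorem heat_idempotent
    {Hp Hm : Type*}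
    [NormedAddCommGroup Hp] [InnerProductSpace ℂ Hp] [CompleteSpace Hp]
    [NormedAddCommGroup Hm] [InnerProductSpace ℂ Hm] [CompleteSpace Hm]
    (Dp : Hp →L[ℂ] Hm) (t : ℝ) (ht : 0 < t) :
    ∀ (Dm : Hm →L[ℂ] Hp), Dm = ContinuousLinearMap.adjoint Dp →
    ∀ (P : Hp →L[ℂ] Hp), P = Dm ∘L Dp →
    ∀ (Q : Hm →L[ℂ] Hm), Q = Dp ∘L Dm →
    ∀ (e₁₁ : Hp →L[ℂ] Hp), e₁₁ = NormedSpace.exp (-(t • P)) →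
    ∀ (e₁₂ : Hm →L[ℂ] Hp),
      e₁₂ = (NormedSpace.exp (-((t / 2) • P)) ∘L
        (∫ s in (0 : ℝ)..t, NormedSpace.exp (-(s • P)))) ∘L Dm →
    ∀ (e₂₁ : Hp →L[ℂ] Hm), e₂₁ = NormedSpace.exp (-((t / 2) • Q)) ∘L Dp →
    ∀ (e₂₂ : Hm →L[ℂ] Hm), e₂₂ = 1 - NormedSpace.exp (-(t • Q)) →
      (e₁₁ ∘L e₁₁ + e₁₂ ∘L e₂₁ = e₁₁ ∧
       e₁₁ ∘L e₁₂ + e₁₂ ∘L e₂₂ = e₁₂ ∧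
       e₂₁ ∘L e₁₁ + e₂₂ ∘L e₂₁ = e₂₁ ∧
       e₂₁ ∘L e₁₂ + e₂₂ ∘L e₂₂ = e₂₂) :=
  heat_idempotent_general Dp t
end
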